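/- arXiv:1904.04664 — 4 statements merged into one kernel-verified Lean document; each statement's English description precedes it below -/
import Mathlib

section
/- Let β̂ be a stationary point of the SLS-GLE objective F(β) = (1/2)‖y − Xβ‖₂² + λ₁‖β‖₁ + (λ₂/2)Σ_{j<j'} |θ_{jj'}|(β_j − sign(θ_{jj'})β_{j'})², with β̂_j ≠ 0 and β̂_{j'} ≠ 0. Suppose θ_{jj'} > 0, sign(β̂_j) = sign(β̂_{j'}), and θ_{jk} = θ_{j'k} for all k ∉ {j, j'}. Then with z = y − Xβ̂: |β̂_j − β̂_{j'}| = |(X_j − X_{j'})^T z| / (λ₂(Σ_{k≠j}|θ_{jk}| + θ_{jj'})). -/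
open Finset Matrix

/-! Subtracting the KKT conditions at `j` and `j'`, the `λ₁`-terms cancel because the signs agree,
the neighbourhood weights `∑_{k ≠ j} |θ_{jk}|` coincide because the rows of `Θ` agree off `{j, j'}`,
and of the coupling sums `∑_{k ≠ j} θ_{jk} b_k` only the `θ_{jj'}` terms survive. What is left is
`(b_j - b_{j'}) λ₂ (∑_{k ≠ j} |θ_{jk}| + θ_{jj'}) = (X_j - X_{j'})ᵀ z`, and the factor is positive since `θ_{jj'} > 0`. -/

theorem sum_filter_ne_sub_sum_filter_ne {ι M : Type*} [Fintype ι] [DecidableEq ι]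
    [AddCommGroup M] (f : ι → ι → M) {j j' : ι} (hne : j ≠ j')
    (hrow : ∀ k, k ≠ j → k ≠ j' → f j k = f j' k) :
    ∑ k ∈ univ.filter (· ≠ j), f j k - ∑ k ∈ univ.filter (· ≠ j'), f j' k = f j j' - f j' j := by
  have hj' : j' ∈ univ.erase j := mem_erase.2 ⟨hne.symm, mem_univ _⟩
  have hj : j ∈ univ.erase j' := mem_erase.2 ⟨hne, mem_univ _⟩
  have hrest : ∑ k ∈ (univ.erase j).erase j', f j k = ∑ k ∈ (univ.erase j').erase j, f j' k := by
    rw [erase_right_comm]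
    refine sum_congr rfl fun k hk => ?_
    obtain ⟨hkj, hk⟩ := mem_erase.1 hk
    exact hrow k hkj (mem_erase.1 hk).1
  rw [filter_ne', filter_ne', ← add_sum_erase _ _ hj', ← add_sum_erase _ _ hj, hrest]
  abel

theorem slsgle_grouping_pos_general {n p : ℕ}
    (y : Fin n → ℝ) (X : Matrix (Fin n) (Fin p) ℝ)
    (Θ : Matrix (Fin p) (Fin p) ℝ) (hΘ : Θ.IsSymm)
    (lam1 lam2 : ℝ) (hlam2 : 0 < lam2)
    (b : Fin p → ℝ)
    (hKKT : ∀ l, b l ≠ 0 →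
      -(∑ i, X i l * (y i - X.mulVec b i)) + lam1 * Real.sign (b l) +
        lam2 * b l * (∑ k ∈ Finset.univ.filter (fun k => k ≠ l), |Θ l k|) -
        lam2 * (∑ k ∈ Finset.univ.filter (fun k => k ≠ l), Θ l k * b k) = 0)
    (j j' : Fin p) (hne : j ≠ j') (hbj : b j ≠ 0) (hbj' : b j' ≠ 0)
    (hpos : 0 < Θ j j') (hsign : Real.sign (b j) = Real.sign (b j'))
    (hrepl : ∀ k, k ≠ j → k ≠ j' → Θ j k = Θ j' k) :
    |b j - b j'| =
      |∑ i, (X i j - X i j') * (y i - X.mulVec b i)| /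
        (lam2 * ((∑ k ∈ Finset.univ.filter (fun k => k ≠ j), |Θ j k|) + Θ j j')) := by
  have hsymm : Θ j' j = Θ j j' := hΘ.apply j j'
  have hweight := sum_filter_ne_sub_sum_filter_ne (fun l k => |Θ l k|) hne
    fun k hkj hkj' => by rw [hrepl k hkj hkj']
  have hcoupling := sum_filter_ne_sub_sum_filter_ne (fun l k => Θ l k * b k) hne
    fun k hkj hkj' => by rw [hrepl k hkj hkj']
  simp only [hsymm, sub_self] at hweight hcoupling
  set D := lam2 * ((∑ k ∈ univ.filter (· ≠ j), |Θ j k|) + Θ j j')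
  have hkey : (b j - b j') * D = ∑ i, (X i j - X i j') * (y i - X.mulVec b i) := by
    simp only [sub_mul, sum_sub_distrib]
    linear_combination hKKT j hbj - hKKT j' hbj' + lam2 * hcoupling
      - lam2 * b j' * hweight - lam1 * hsign
  have hD : 0 < D :=
    mul_pos hlam2 (add_pos_of_nonneg_of_pos (sum_nonneg fun _ _ => abs_nonneg _) hpos)
  rw [← hkey, abs_mul, abs_of_pos hD, mul_div_cancel_right₀ _ hD.ne']

/-- Grouping effect of SLS-GLE (positive conditional dependence): at a stationary point
`b` of the SLS-GLE objective, if `θ_{jj'} > 0`, `sign(b_j) = sign(b_{j'})` and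
`θ_{jk} = θ_{j'k}` for `k ∉ {j, j'}`, then with `z = y - Xb`,
`|b_j - b_{j'}| = |(X_j - X_{j'})ᵀ z| / (λ₂(∑_{k≠j}|θ_{jk}| + θ_{jj'}))`. -/
theorem slsgle_grouping_pos {n p : ℕ}
    (y : Fin n → ℝ) (X : Matrix (Fin n) (Fin p) ℝ)
    (Θ : Matrix (Fin p) (Fin p) ℝ) (hΘ : Θ.IsSymm)
    (lam1 lam2 : ℝ) (hlam1 : 0 < lam1) (hlam2 : 0 < lam2)
    (b : Fin p → ℝ)
    (hKKT : ∀ l, b l ≠ 0 →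
      -(∑ i, X i l * (y i - X.mulVec b i)) + lam1 * Real.sign (b l) +
        lam2 * b l * (∑ k ∈ Finset.univ.filter (fun k => k ≠ l), |Θ l k|) -
        lam2 * (∑ k ∈ Finset.univ.filter (fun k => k ≠ l), Θ l k * b k) = 0)
    (j j' : Fin p) (hne : j ≠ j') (hbj : b j ≠ 0) (hbj' : b j' ≠ 0)
    (hpos : 0 < Θ j j') (hsign : Real.sign (b j) = Real.sign (b j'))
    (hrepl : ∀ k, k ≠ j → k ≠ j' → Θ j k = Θ j' k) :
    |b j - b j'| =
      |∑ i, (X i j - X i j') * (y i - X.mulVec b i)| /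
        (lam2 * ((∑ k ∈ Finset.univ.filter (fun k => k ≠ j), |Θ j k|) + Θ j j')) :=
  slsgle_grouping_pos_general y X Θ hΘ lam1 lam2 hlam2 b hKKT j j' hne hbj hbj' hpos hsign hrepl
end

section
/- Let β̂ be a stationary point of the SLS-GLE objective with β̂_j ≠ 0, β̂_{j'} ≠ 0, θ_{jj'} < 0, sign(β̂_j) = −sign(β̂_{j'}), and θ_{jk} = −θ_{j'k} for all k ∉ {j, j'}. Then with z = y − Xβ̂: |β̂_j + β̂_{j'}| = |(X_j + X_{j'})^T z| / (λ₂(Σ_{k≠j}|θ_{jk}| − θ_{jj'})). -/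
/-!
Add the stationarity equations at `j` and `j'`. The `ℓ₁` terms cancel because the signs are
opposite. The replication `θ_{jk} = -θ_{j'k}` off `{j, j'}` makes the two penalty weights
`∑_{k≠j} |θ_{jk}|` and `∑_{k≠j'} |θ_{j'k}|` equal and makes the couplings through the other
coordinates cancel, so the sum reads `(X_j + X_{j'})ᵀ z = λ₂ (∑_{k≠j} |θ_{jk}| - θ_{jj'}) (b_j + b_{j'})`.
Since `θ_{jj'} < 0`, the factor in front of `b_j + b_{j'}` is positive.
-/

open Finset Matrix

section OffDiagonal

variable {ι : Type*} [Fintype ι] [DecidableEq ι]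

theorem sum_filter_ne_eq_add_sum_compl_pair {M : Type*} [AddCommMonoid M] {j j' : ι}
    (h : j ≠ j') (f : ι → M) :
    ∑ k ∈ univ.filter (fun k => k ≠ j), f k = f j' + ∑ k ∈ ({j, j'} : Finset ι)ᶜ, f k := by
  rw [← add_sum_erase _ f (by simpa using h.symm : j' ∈ univ.filter (fun k => k ≠ j))]
  congr 2
  ext k
  simp [and_comm]

variable {Θ : Matrix ι ι ℝ} {j j' : ι}

theorem sum_filter_ne_abs_eq_of_antireplicated (hΘ : Θ.IsSymm) (hne : j ≠ j')
    (hrepl : ∀ k, k ≠ j → k ≠ j' → Θ j k = -Θ j' k) :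
    ∑ k ∈ univ.filter (fun k => k ≠ j'), |Θ j' k| = ∑ k ∈ univ.filter (fun k => k ≠ j), |Θ j k| := by
  rw [sum_filter_ne_eq_add_sum_compl_pair hne, sum_filter_ne_eq_add_sum_compl_pair hne.symm,
    pair_comm j' j, hΘ.apply j j']
  congr 1
  refine sum_congr rfl fun k hk => ?_
  simp only [mem_compl, mem_insert, mem_singleton, not_or] at hk
  rw [hrepl k hk.1 hk.2, abs_neg]

theorem sum_filter_ne_mul_add_of_antireplicated (hΘ : Θ.IsSymm) (hne : j ≠ j')
    (hrepl : ∀ k, k ≠ j → k ≠ j' → Θ j k = -Θ j' k) (b : ι → ℝ) :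
    ∑ k ∈ univ.filter (fun k => k ≠ j), Θ j k * b k +
        ∑ k ∈ univ.filter (fun k => k ≠ j'), Θ j' k * b k = Θ j j' * (b j + b j') := by
  rw [sum_filter_ne_eq_add_sum_compl_pair hne, sum_filter_ne_eq_add_sum_compl_pair hne.symm,
    pair_comm j' j, hΘ.apply j j', add_add_add_comm, ← sum_add_distrib]
  have hcancel : ∑ k ∈ ({j, j'} : Finset ι)ᶜ, (Θ j k * b k + Θ j' k * b k) = 0 := by
    refine sum_eq_zero fun k hk => ?_
    simp only [mem_compl, mem_insert, mem_singleton, not_or] at hk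
    rw [hrepl k hk.1 hk.2]
    ring
  rw [hcancel]
  ring

theorem sum_filter_ne_abs_sub_pos_of_neg (hne : j ≠ j') (hneg : Θ j j' < 0) :
    0 < ∑ k ∈ univ.filter (fun k => k ≠ j), |Θ j k| - Θ j j' := by
  have : |Θ j j'| ≤ ∑ k ∈ univ.filter (fun k => k ≠ j), |Θ j k| :=
    single_le_sum (fun k _ => abs_nonneg (Θ j k)) (by simpa using hne.symm)
  linarith [abs_nonneg (Θ j j')]

end OffDiagonal

theorem slsgle_grouping_neg_general {n p : ℕ}
    (y : Fin n → ℝ) (X : Matrix (Fin n) (Fin p) ℝ)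
    (Θ : Matrix (Fin p) (Fin p) ℝ) (hΘ : Θ.IsSymm)
    (lam1 lam2 : ℝ) (hlam2 : 0 < lam2)
    (b : Fin p → ℝ)
    (hKKT : ∀ l, b l ≠ 0 →
      -(∑ i, X i l * (y i - X.mulVec b i)) + lam1 * Real.sign (b l) +
        lam2 * b l * (∑ k ∈ Finset.univ.filter (fun k => k ≠ l), |Θ l k|) -
        lam2 * (∑ k ∈ Finset.univ.filter (fun k => k ≠ l), Θ l k * b k) = 0)
    (j j' : Fin p) (hne : j ≠ j') (hbj : b j ≠ 0) (hbj' : b j' ≠ 0)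
    (hneg : Θ j j' < 0) (hsign : Real.sign (b j) = -Real.sign (b j'))
    (hrepl : ∀ k, k ≠ j → k ≠ j' → Θ j k = -Θ j' k) :
    |b j + b j'| =
      |∑ i, (X i j + X i j') * (y i - X.mulVec b i)| /
        (lam2 * ((∑ k ∈ Finset.univ.filter (fun k => k ≠ j), |Θ j k|) - Θ j j')) := by
  have hKKTj' := hKKT j' hbj'
  rw [sum_filter_ne_abs_eq_of_antireplicated hΘ hne hrepl] at hKKTj'
  have hgrad : ∑ i, (X i j + X i j') * (y i - X.mulVec b i) =
      lam2 * (∑ k ∈ univ.filter (fun k => k ≠ j), |Θ j k| - Θ j j') * (b j + b j') := by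
    simp only [add_mul, sum_add_distrib]
    linear_combination lam1 * hsign - hKKT j hbj - hKKTj' -
      lam2 * sum_filter_ne_mul_add_of_antireplicated hΘ hne hrepl b
  have hden := mul_pos hlam2 (sum_filter_ne_abs_sub_pos_of_neg hne hneg)
  rw [hgrad, abs_mul, abs_of_pos hden, mul_div_cancel_left₀ _ hden.ne']

/-- Grouping effect of SLS-GLE (negative conditional dependence): at a stationary point
`b` of the SLS-GLE objective, if `θ_{jj'} < 0`, `sign(b_j) = -sign(b_{j'})` and
`θ_{jk} = -θ_{j'k}` for `k ∉ {j, j'}`, then with `z = y - Xb`,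
`|b_j + b_{j'}| = |(X_j + X_{j'})ᵀ z| / (λ₂(∑_{k≠j}|θ_{jk}| - θ_{jj'}))`. -/
theorem slsgle_grouping_neg {n p : ℕ}
    (y : Fin n → ℝ) (X : Matrix (Fin n) (Fin p) ℝ)
    (Θ : Matrix (Fin p) (Fin p) ℝ) (hΘ : Θ.IsSymm)
    (lam1 lam2 : ℝ) (hlam1 : 0 < lam1) (hlam2 : 0 < lam2)
    (b : Fin p → ℝ)
    (hKKT : ∀ l, b l ≠ 0 →
      -(∑ i, X i l * (y i - X.mulVec b i)) + lam1 * Real.sign (b l) +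
        lam2 * b l * (∑ k ∈ Finset.univ.filter (fun k => k ≠ l), |Θ l k|) -
        lam2 * (∑ k ∈ Finset.univ.filter (fun k => k ≠ l), Θ l k * b k) = 0)
    (j j' : Fin p) (hne : j ≠ j') (hbj : b j ≠ 0) (hbj' : b j' ≠ 0)
    (hneg : Θ j j' < 0) (hsign : Real.sign (b j) = -Real.sign (b j'))
    (hrepl : ∀ k, k ≠ j → k ≠ j' → Θ j k = -Θ j' k) :
    |b j + b j'| =
      |∑ i, (X i j + X i j') * (y i - X.mulVec b i)| /
        (lam2 * ((∑ k ∈ Finset.univ.filter (fun k => k ≠ j), |Θ j k|) - Θ j j')) :=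
  slsgle_grouping_neg_general y X Θ hΘ lam1 lam2 hlam2 b hKKT j j' hne hbj hbj' hneg hsign hrepl
end

section
/- Let β̂^en be a stationary point of the elastic net objective, i.e. for each j with β̂^en_j ≠ 0: −X_j^T(y − Xβ̂^en) + λ₁ sign(β̂^en_j) + λ₂ β̂^en_j = 0. If β̂^en_j ≠ 0, β̂^en_{j'} ≠ 0 and sign(β̂^en_j) = sign(β̂^en_{j'}), then |β̂^en_j − β̂^en_{j'}| = (1/λ₂)|(X_j − X_{j'})^T z^en| where z^en = y − Xβ̂^en. -/
open Finset Matrix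

theorem elasticnet_grouping_general {n p : ℕ}
    (y : Fin n → ℝ) (X : Matrix (Fin n) (Fin p) ℝ)
    (lam1 lam2 : ℝ) (hlam2 : 0 < lam2)
    (b : Fin p → ℝ)
    (hKKT : ∀ l, b l ≠ 0 →
      -(∑ i, X i l * (y i - X.mulVec b i)) + lam1 * Real.sign (b l) + lam2 * b l = 0)
    (j j' : Fin p) (hbj : b j ≠ 0) (hbj' : b j' ≠ 0)
    (hsign : Real.sign (b j) = Real.sign (b j')) :
    |b j - b j'| = (1 / lam2) * |∑ i, (X i j - X i j') * (y i - X.mulVec b i)| := by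
  have hj := hKKT j hbj
  have hj' := hKKT j' hbj'
  rw [← hsign] at hj'
  -- Subtracting the two stationarity equations cancels the equal `λ₁ sign` terms.
  have hdiff : lam2 * (b j - b j') = ∑ i, (X i j - X i j') * (y i - X.mulVec b i) := by
    simp only [sub_mul, Finset.sum_sub_distrib]
    linarith
  rw [← hdiff, abs_mul, abs_of_pos hlam2, one_div, inv_mul_cancel_left₀ hlam2.ne']

/-- Grouping effect of the elastic net: at a stationary point `b` of the elastic net
objective, if `b_j ≠ 0`, `b_{j'} ≠ 0` and `sign(b_j) = sign(b_{j'})`, then with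
`z = y - Xb`, `|b_j - b_{j'}| = (1/λ₂)|(X_j - X_{j'})ᵀ z|`. -/
theorem elasticnet_grouping {n p : ℕ}
    (y : Fin n → ℝ) (X : Matrix (Fin n) (Fin p) ℝ)
    (lam1 lam2 : ℝ) (hlam1 : 0 ≤ lam1) (hlam2 : 0 < lam2)
    (b : Fin p → ℝ)
    (hKKT : ∀ l, b l ≠ 0 →
      -(∑ i, X i l * (y i - X.mulVec b i)) + lam1 * Real.sign (b l) + lam2 * b l = 0)
    (j j' : Fin p) (hbj : b j ≠ 0) (hbj' : b j' ≠ 0)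
    (hsign : Real.sign (b j) = Real.sign (b j')) :
    |b j - b j'| = (1 / lam2) * |∑ i, (X i j - X i j') * (y i - X.mulVec b i)| :=
  elasticnet_grouping_general y X lam1 lam2 hlam2 b hKKT j j' hbj hbj' hsign
end

section
/- Sign recovery via KKT: suppose β has support S with sign vector sign(β_S), and there exists β̂ with β̂_{S^c} = 0 satisfying (i) (X_S^T X_S + λ₂Γ̂_S)β̂_S − X_S^T X_S β_S − X_S^T ε = −λ₁ sign(β_S), (ii) |(X_{S^c}^T X_S + λ₂Γ̂_{S^c})β̂_S − X_{S^c}^T X_S β_S − X_{S^c}^T ε| ≤ λ₁ coordinatewise, and (iii) |β̂_S − β_S| < |β_S| coordinatewise. Then β̂ is a global minimizer of the SLS-GLE objective (with y = Xβ + ε) and sign(β̂) = sign(β). -/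
open Finset Matrix

/-!
The objective is `f + λ₁‖·‖₁` with `f b = ½‖y − Xb‖² + (λ₂/2) bᵀΓ̂b` a convex quadratic whose
gradient at `β̂` is `g = Xᵀ(Xβ̂ − y) + λ₂Γ̂β̂`. Condition (iii) forces `sign β̂ = sign β`, so (i) and
(ii) say that `|g_j| ≤ λ₁` and `g_j β̂_j = −λ₁|β̂_j|` for every `j`, i.e. `−g` is a subgradient of
`λ₁‖·‖₁` at `β̂`. Adding the first-order lower bound `f b ≥ f β̂ + ⟪g, b − β̂⟫` to the subgradient
inequality gives global optimality.
-/

theorem Real.sign_eq_of_abs_sub_lt {a b : ℝ} (h : |a - b| < |b|) : Real.sign a = Real.sign b := by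
  obtain ⟨h₁, h₂⟩ := abs_lt.mp h
  rcases lt_trichotomy b 0 with hb | rfl | hb
  · rw [abs_of_neg hb] at h₁ h₂
    rw [Real.sign_of_neg hb, Real.sign_of_neg (by linarith)]
  · simp only [sub_zero, abs_zero] at h
    exact absurd h (abs_nonneg a).not_gt
  · rw [abs_of_pos hb] at h₁ h₂
    rw [Real.sign_of_pos hb, Real.sign_of_pos (by linarith)]

theorem Real.sign_mul_self (r : ℝ) : Real.sign r * r = |r| := by
  rcases lt_trichotomy r 0 with hr | rfl | hr
  · simp [Real.sign_of_neg hr, abs_of_neg hr]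
  · simp
  · simp [Real.sign_of_pos hr, abs_of_pos hr]

theorem Real.abs_sign_le_one (r : ℝ) : |Real.sign r| ≤ 1 := by
  rcases Real.sign_apply_eq r with h | h | h <;> simp [h]

/-- The subgradient inequality of `l * |·|` at `a`, for a subgradient `-g`. -/
theorem mul_abs_le_mul_abs_add_mul_sub {g l a b : ℝ} (hg : |g| ≤ l) (ha : g * a = -(l * |a|)) :
    l * |a| ≤ l * |b| + g * (b - a) := by
  have : -(l * |b|) ≤ g * b :=
    calc -(l * |b|) ≤ -(|g| * |b|) := neg_le_neg (mul_le_mul_of_nonneg_right hg (abs_nonneg b))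
      _ = -|g * b| := by rw [abs_mul]
      _ ≤ g * b := neg_abs_le _
  linarith

theorem sum_sq_add_two_mul_sum_mul_sub_le {ι : Type*} [Fintype ι] (u w : ι → ℝ) :
    ∑ i, w i ^ 2 + 2 * ∑ i, w i * (u i - w i) ≤ ∑ i, u i ^ 2 := by
  rw [mul_sum, ← sum_add_distrib]
  exact sum_le_sum fun i _ => by nlinarith [sq_nonneg (u i - w i)]

theorem Matrix.PosSemidef.dotProduct_mulVec_add_two_mul_le {ι : Type*} [Fintype ι]
    {M : Matrix ι ι ℝ} (hM : M.PosSemidef) (a b : ι → ℝ) :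
    a ⬝ᵥ M *ᵥ a + 2 * (M *ᵥ a ⬝ᵥ (b - a)) ≤ b ⬝ᵥ M *ᵥ b := by
  obtain ⟨d, rfl⟩ : ∃ d, b = a + d := ⟨b - a, by abel⟩
  have hMT : Mᵀ = M := by rw [← conjTranspose_eq_transpose_of_trivial, hM.isHermitian.eq]
  have hsymm : a ⬝ᵥ M *ᵥ d = M *ᵥ a ⬝ᵥ d := by
    rw [dotProduct_mulVec, ← mulVec_transpose, hMT]
  have hd : 0 ≤ d ⬝ᵥ M *ᵥ d := by simpa using hM.dotProduct_mulVec_nonneg d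
  rw [add_sub_cancel_left, mulVec_add, dotProduct_add, add_dotProduct, add_dotProduct, hsymm,
    dotProduct_comm d (M *ᵥ a)]
  linarith

section SLSGLE

variable {m ι : Type*} [Fintype m] [Fintype ι]
  (X : Matrix m ι ℝ) (y : m → ℝ) (Γ : Matrix ι ι ℝ)

noncomputable def slsgleObjective (lam1 lam2 : ℝ) (b : ι → ℝ) : ℝ :=
  (1 / 2) * ∑ i, (y i - (X *ᵥ b) i) ^ 2 + lam1 * ∑ j, |b j| + (lam2 / 2) * (b ⬝ᵥ Γ *ᵥ b)

def slsgleSmoothGradient (lam2 : ℝ) (b : ι → ℝ) : ι → ℝ :=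
  Xᵀ *ᵥ (X *ᵥ b - y) + lam2 • (Γ *ᵥ b)

theorem sum_residual_mul_sub_residual (a b : ι → ℝ) :
    ∑ i, (y i - (X *ᵥ a) i) * ((y i - (X *ᵥ b) i) - (y i - (X *ᵥ a) i)) =
      Xᵀ *ᵥ (X *ᵥ a - y) ⬝ᵥ (b - a) := by
  have hdiff : ∀ i, (y i - (X *ᵥ b) i) - (y i - (X *ᵥ a) i) = (X *ᵥ (a - b)) i := fun i => by
    simp only [mulVec_sub, Pi.sub_apply]; ring
  simp_rw [hdiff]
  change (y - X *ᵥ a) ⬝ᵥ X *ᵥ (a - b) = _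
  rw [dotProduct_mulVec, ← mulVec_transpose, ← neg_sub b a, ← neg_sub (X *ᵥ a) y, mulVec_neg,
    neg_dotProduct_neg]

theorem slsgleObjective_le_of_subgradient {lam1 lam2 : ℝ} (hΓ : Γ.PosSemidef) (hlam2 : 0 ≤ lam2)
    {a : ι → ℝ} (hkkt : ∀ j, |slsgleSmoothGradient X y Γ lam2 a j| ≤ lam1 ∧
      slsgleSmoothGradient X y Γ lam2 a j * a j = -(lam1 * |a j|)) (b : ι → ℝ) :
    slsgleObjective X y Γ lam1 lam2 a ≤ slsgleObjective X y Γ lam1 lam2 b := by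
  set g := slsgleSmoothGradient X y Γ lam2 a
  have hres := sum_sq_add_two_mul_sum_mul_sub_le (fun i => y i - (X *ᵥ b) i)
    (fun i => y i - (X *ᵥ a) i)
  rw [sum_residual_mul_sub_residual] at hres
  have hquad := mul_le_mul_of_nonneg_left (hΓ.dotProduct_mulVec_add_two_mul_le a b) hlam2
  have hl1 : lam1 * ∑ j, |a j| ≤ lam1 * ∑ j, |b j| + g ⬝ᵥ (b - a) := by
    rw [mul_sum, mul_sum, dotProduct, ← sum_add_distrib]
    exact sum_le_sum fun j _ => mul_abs_le_mul_abs_add_mul_sub (hkkt j).1 (hkkt j).2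
  have hg : g ⬝ᵥ (b - a) = Xᵀ *ᵥ (X *ᵥ a - y) ⬝ᵥ (b - a) + lam2 * (Γ *ᵥ a ⬝ᵥ (b - a)) := by
    simp only [g, slsgleSmoothGradient, add_dotProduct, smul_dotProduct, smul_eq_mul]
  unfold slsgleObjective
  linarith

end SLSGLE

/-- Sign recovery via KKT (Lemma 4 step): with `y = Xβ + ε`, `S = supp(β)`, if `β̂`
vanishes off `S` and satisfies (i) the stationarity equation on `S` with subgradient
`sign(β_S)`, (ii) the dual feasibility bound off `S`, and (iii) `|β̂_S − β_S| < |β_S|`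
coordinatewise, then `β̂` is a global minimizer of the SLS-GLE objective and
`sign(β̂) = sign(β)`. -/
theorem slsgle_sign_recovery {n p : ℕ}
    (X : Matrix (Fin n) (Fin p) ℝ) (β : Fin p → ℝ) (ε : Fin n → ℝ)
    (Γ : Matrix (Fin p) (Fin p) ℝ) (hΓ : Γ.PosSemidef)
    (lam1 lam2 : ℝ) (hlam1 : 0 < lam1) (hlam2 : 0 ≤ lam2)
    (bhat : Fin p → ℝ)
    (hsupp : ∀ j, β j = 0 → bhat j = 0)
    -- (i) stationarity on `S` (using `β̂_{Sᶜ} = 0`, the `S`-block equations read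
    -- `(XᵀXβ̂ + λ₂Γ̂β̂ − XᵀXβ − Xᵀε)_j = −λ₁ sign(β_j)` for `j ∈ S`)
    (hi : ∀ j, β j ≠ 0 →
      (Xᵀ * X).mulVec bhat j + lam2 * Γ.mulVec bhat j -
          (Xᵀ * X).mulVec β j - Xᵀ.mulVec ε j = -lam1 * Real.sign (β j))
    -- (ii) dual feasibility off `S`
    (hii : ∀ j, β j = 0 →
      |(Xᵀ * X).mulVec bhat j + lam2 * Γ.mulVec bhat j -
          (Xᵀ * X).mulVec β j - Xᵀ.mulVec ε j| ≤ lam1)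
    -- (iii)
    (hiii : ∀ j, β j ≠ 0 → |bhat j - β j| < |β j|) :
    (∀ b : Fin p → ℝ,
      (1 / 2) * ∑ i, ((X.mulVec β + ε) i - X.mulVec bhat i) ^ 2 +
          lam1 * ∑ j, |bhat j| + (lam2 / 2) * (bhat ⬝ᵥ Γ.mulVec bhat) ≤
        (1 / 2) * ∑ i, ((X.mulVec β + ε) i - X.mulVec b i) ^ 2 +
          lam1 * ∑ j, |b j| + (lam2 / 2) * (b ⬝ᵥ Γ.mulVec b)) ∧
    (∀ j, Real.sign (bhat j) = Real.sign (β j)) := by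
  have hsign (j : Fin p) : Real.sign (bhat j) = Real.sign (β j) := by
    by_cases hj : β j = 0
    · rw [hsupp j hj, hj]
    · exact Real.sign_eq_of_abs_sub_lt (hiii j hj)
  have hgrad (j : Fin p) : slsgleSmoothGradient X (X *ᵥ β + ε) Γ lam2 bhat j =
      ((Xᵀ * X) *ᵥ bhat) j + lam2 * (Γ *ᵥ bhat) j - ((Xᵀ * X) *ᵥ β) j - (Xᵀ *ᵥ ε) j := by
    simp only [slsgleSmoothGradient, mulVec_sub, mulVec_add, ← mulVec_mulVec, Pi.add_apply,
      Pi.sub_apply, Pi.smul_apply, smul_eq_mul]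
    ring
  refine ⟨slsgleObjective_le_of_subgradient X _ Γ hΓ hlam2 fun j => ?_, hsign⟩
  rw [hgrad]
  by_cases hj : β j = 0
  · rw [hsupp j hj, mul_zero, abs_zero, mul_zero, neg_zero]
    exact ⟨hii j hj, rfl⟩
  · rw [hi j hj, ← hsign j, mul_assoc, Real.sign_mul_self, abs_mul, abs_neg, abs_of_pos hlam1]
    exact ⟨mul_le_of_le_one_right hlam1.le (Real.abs_sign_le_one _), neg_mul _ _⟩
end
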